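/- arXiv:1908.08049 — 2 statements merged into one kernel-verified Lean document; each statement's English description precedes it below -/
import Mathlib

section
/- Let C_out be the 10×12 matrix over Z_2 given in eq. (x1-1) of the cubic code 8 analysis (rows: r1 = e1+e2, r2 = e1, r3 = e8, r4 = e5+e6, r5 = e5, r6 = e12, r7 = e10+e11, r8 = e7+e8+e10+e11+e12, r9 = e2+e3, r10 = e1+e2+e3+e4+e5+e6, where e_i are standard basis vectors of Z_2^{12}). Then every vector v in the kernel of the map v ↦ C_out Ω v^T (with Ω the 12×12 symplectic matrix pairing coordinates i and i+6) has v restricted to coordinates (1,2,7,8) equal to zero. -/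
open Matrix

/-- Standard basis vectors of `Z₂^{12}` (0-indexed: `e12 i` is `e_{i+1}` of the paper). -/
def e12 (i : Fin 12) : Fin 12 → ZMod 2 := Pi.single i 1

/-- The `12 × 12` symplectic matrix pairing coordinate `i` with coordinate `i + 6`. -/
def Omega12 : Matrix (Fin 12) (Fin 12) (ZMod 2) :=
  fun i j => if (i.val + 6) % 12 = j.val then 1 else 0

/-- The `10 × 12` constraint matrix `C_out` of eq. (x1-1) of the cubic code 8 analysis. -/
def CoutX1 : Matrix (Fin 10) (Fin 12) (ZMod 2) :=
  Matrix.of ![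
    e12 0 + e12 1,
    e12 0,
    e12 7,
    e12 4 + e12 5,
    e12 4,
    e12 11,
    e12 9 + e12 10,
    e12 6 + e12 7 + e12 9 + e12 10 + e12 11,
    e12 1 + e12 2,
    e12 0 + e12 1 + e12 2 + e12 3 + e12 4 + e12 5]


def CO : Matrix (Fin 10) (Fin 12) (ZMod 2) :=
  Matrix.of ![
    e12 6 + e12 7, e12 6, e12 1, e12 10 + e12 11, e12 10, e12 5,
    e12 3 + e12 4, e12 0 + e12 1 + e12 3 + e12 4 + e12 5,
    e12 7 + e12 8, e12 6 + e12 7 + e12 8 + e12 9 + e12 10 + e12 11]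

lemma prod_eq : CoutX1 * Omega12 = CO := by decide

lemma sum_univ_twelve {M : Type*} [AddCommMonoid M] (f : Fin 12 → M) :
    ∑ i, f i = f 0 + f 1 + f 2 + f 3 + f 4 + f 5 + f 6 + f 7 + f 8 + f 9 + f 10 + f 11 := by
  rw [Fin.sum_univ_castSucc, Fin.sum_univ_castSucc, Fin.sum_univ_castSucc,
    Fin.sum_univ_castSucc, Fin.sum_univ_eight]
  rfl

lemma r0 : CO 0 = e12 6 + e12 7 := rfl
lemma r1 : CO 1 = e12 6 := rfl
lemma r2 : CO 2 = e12 1 := rfl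
lemma r5 : CO 5 = e12 5 := rfl
lemma r6 : CO 6 = e12 3 + e12 4 := rfl
lemma r7 : CO 7 = e12 0 + e12 1 + e12 3 + e12 4 + e12 5 := rfl

set_option maxHeartbeats 2000000 in
/-- Every vector `v` in the kernel of `v ↦ C_out Ω vᵀ` has its restriction to the
coordinates of vertex `a` (the `a_X` coordinates 1,2 and `a_Z` coordinates 7,8, i.e.
0-indexed coordinates 0, 1, 6, 7) equal to zero, proving the corner at vertex `a` can be
cleaned. -/
theorem x1_corner_cleanable (v : Fin 12 → ZMod 2)
    (hv : (CoutX1 * Omega12).mulVec v = 0) :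
    v 0 = 0 ∧ v 1 = 0 ∧ v 6 = 0 ∧ v 7 = 0 := by
  rw [prod_eq] at hv
  have h0 := congrFun hv 0
  have h1 := congrFun hv 1
  have h2 := congrFun hv 2
  have h5 := congrFun hv 5
  have h6 := congrFun hv 6
  have h7 := congrFun hv 7
  simp [Matrix.mulVec, dotProduct, sum_univ_twelve, r0, r1, r2, r5, r6, r7,
    e12, Pi.single_apply] at h0 h1 h2 h5 h6 h7
  exact ⟨by linear_combination h7 - h2 - h5 - h6, h2, h1, by linear_combination h0 - h1⟩
end

section
/- Let C_out be the 14×20 matrix over Z_2 given in eq. (z11) of the cubic code 8 analysis. Then every vector v ∈ Z_2^{20} in the kernel of v ↦ C_out Ω v^T has its restriction to the coordinates of vertex c (coordinates 5,6 for c_X and 15,16 for c_Z) equal to zero. -/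
open Matrix

/-- Standard basis vectors of `Z₂^{20}` (0-indexed: `e20 i` is `e_{i+1}` of the paper). -/
def e20 (i : Fin 20) : Fin 20 → ZMod 2 := Pi.single i 1

/-- The `20 × 20` symplectic matrix pairing coordinate `i` with coordinate `i + 10`. -/
def Omega20 : Matrix (Fin 20) (Fin 20) (ZMod 2) :=
  fun i j => if (i.val + 10) % 20 = j.val then 1 else 0

/-- The `14 × 20` constraint matrix `C_out` of eq. (z11) of the cubic code 8 analysis. -/
def CoutZ11 : Matrix (Fin 14) (Fin 20) (ZMod 2) :=
  Matrix.of ![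
    e20 0 + e20 1,
    e20 4 + e20 5,
    e20 8 + e20 9,
    e20 11,
    e20 15,
    e20 19,
    e20 1 + e20 2 + e20 3 + e20 4,
    e20 0 + e20 2 + e20 3 + e20 4 + e20 5,
    e20 5 + e20 6 + e20 7 + e20 8,
    e20 4 + e20 6 + e20 7 + e20 8 + e20 9,
    e20 11 + e20 13 + e20 14,
    e20 10 + e20 11 + e20 15,
    e20 15 + e20 17 + e20 18,
    e20 14 + e20 15 + e20 19]

def Prod20 : Matrix (Fin 14) (Fin 20) (ZMod 2) :=
  Matrix.of ![
    e20 10 + e20 11,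
    e20 14 + e20 15,
    e20 18 + e20 19,
    e20 1,
    e20 5,
    e20 9,
    e20 11 + e20 12 + e20 13 + e20 14,
    e20 10 + e20 12 + e20 13 + e20 14 + e20 15,
    e20 15 + e20 16 + e20 17 + e20 18,
    e20 14 + e20 16 + e20 17 + e20 18 + e20 19,
    e20 1 + e20 3 + e20 4,
    e20 0 + e20 1 + e20 5,
    e20 5 + e20 7 + e20 8,
    e20 4 + e20 5 + e20 9]

lemma prod_eq_s10 : CoutZ11 * Omega20 = Prod20 := by decide

/-- Every vector `v ∈ Z₂^{20}` in the kernel of `v ↦ C_out Ω vᵀ` has its restriction to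
the coordinates of vertex `c` (the `c_X` coordinates 5,6 and `c_Z` coordinates 15,16, i.e.
0-indexed coordinates 4, 5, 14, 15) equal to zero, proving that the stairwell corner `c`
can be cleaned. -/
theorem z11_corner_cleanable (v : Fin 20 → ZMod 2)
    (hv : (CoutZ11 * Omega20).mulVec v = 0) :
    v 4 = 0 ∧ v 5 = 0 ∧ v 14 = 0 ∧ v 15 = 0 := by
  rw [prod_eq_s10] at hv
  have h : ∀ i, Prod20 i ⬝ᵥ v = 0 := fun i => congrFun hv i
  have h0 := h 0; have h1 := h 1; have h4 := h 4; have h5 := h 5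
  have h6 := h 6; have h7 := h 7; have h13 := h 13
  rw [show Prod20 0 = e20 10 + e20 11 from by decide] at h0
  rw [show Prod20 1 = e20 14 + e20 15 from by decide] at h1
  rw [show Prod20 4 = e20 5 from by decide] at h4
  rw [show Prod20 5 = e20 9 from by decide] at h5
  rw [show Prod20 6 = e20 11 + e20 12 + e20 13 + e20 14 from by decide] at h6
  rw [show Prod20 7 = e20 10 + e20 12 + e20 13 + e20 14 + e20 15 from by decide] at h7
  rw [show Prod20 13 = e20 4 + e20 5 + e20 9 from by decide] at h13
  simp only [e20, add_dotProduct, single_dotProduct, one_mul] at h0 h1 h4 h5 h6 h7 h13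
  have htwo : (2 : ZMod 2) = 0 := by decide
  refine ⟨?_, ?_, ?_, ?_⟩
  · linear_combination h13 + h5 + h4 - (v 5 + v 9) * htwo
  · linear_combination h4
  · linear_combination h1 + h0 + h6 + h7 - (v 10 + v 11 + v 12 + v 13 + v 14 + v 15) * htwo
  · linear_combination h0 + h6 + h7 - (v 10 + v 11 + v 12 + v 13 + v 14) * htwo
end
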